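/- arXiv:1402.2641 — 3 statements merged into one kernel-verified Lean document; each statement's English description precedes it below -/
import Mathlib

section
/- For every k ≥ 4, the k-wheel (the graph obtained from the chordless cycle C_k by adding a universal vertex adjacent to all cycle vertices) is a circular-arc graph but is not a normal Helly circular-arc graph. -/
open SimpleGraph

/-- The circle (of circumference 1), as the additive circle `ℝ / ℤ`. -/
abbrev Circ : Type := AddCircle (1 : ℝ)

/-- The closed arc of the circle obtained by projecting the real interval `[p.1, p.2]`. -/
def arcIcc (p : ℝ × ℝ) : Set Circ := (fun x : ℝ => (x : Circ)) '' Set.Icc p.1 p.2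

/-- `M` is a circular-arc model of the graph `G`: each vertex gets a (nonempty, closed) arc,
and two distinct vertices are adjacent iff their arcs intersect. -/
def IsCAModel {V : Type*} (G : SimpleGraph V) (M : V → ℝ × ℝ) : Prop :=
  (∀ v, (M v).1 ≤ (M v).2) ∧
  ∀ u v : V, u ≠ v → (G.Adj u v ↔ (arcIcc (M u) ∩ arcIcc (M v)).Nonempty)

/-- A circular-arc graph: the intersection graph of a finite set of arcs on a circle. -/
def IsCircularArcGraph {V : Type*} [Finite V] (G : SimpleGraph V) : Prop :=
  ∃ M : V → ℝ × ℝ, IsCAModel G M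

/-- A normal Helly circular-arc graph: the intersection graph of a finite set of arcs
on a circle, no three of which together cover the circle. -/
def IsNHCAGraph {V : Type*} [Finite V] (G : SimpleGraph V) : Prop :=
  ∃ M : V → ℝ × ℝ, IsCAModel G M ∧
    ∀ u v w : V, u ≠ v → u ≠ w → v ≠ w →
      arcIcc (M u) ∪ arcIcc (M v) ∪ arcIcc (M w) ≠ Set.univ

/-- `M` is an interval model of `G`: closed real intervals, adjacency iff intersection. -/
def IsIntervalModel {V : Type*} (G : SimpleGraph V) (M : V → ℝ × ℝ) : Prop :=
  (∀ v, (M v).1 ≤ (M v).2) ∧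
  ∀ u v : V, u ≠ v →
    (G.Adj u v ↔ (Set.Icc (M u).1 (M u).2 ∩ Set.Icc (M v).1 (M v).2).Nonempty)

/-- An interval graph: the intersection graph of a finite set of intervals on a line. -/
def IsIntervalGraph {V : Type*} [Finite V] (G : SimpleGraph V) : Prop :=
  ∃ M : V → ℝ × ℝ, IsIntervalModel G M

/-- The chordless path `P_m` on `m` vertices. -/
def pathG (m : ℕ) : SimpleGraph (Fin m) :=
  SimpleGraph.fromRel (fun i j => i.val + 1 = j.val)

/-- The chordless cycle `C_n` on `n` vertices (intended for `n ≥ 3`). -/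
def cycG (n : ℕ) : SimpleGraph (Fin n) :=
  SimpleGraph.fromRel (fun i j => (i.val + 1) % n = j.val)

/-- `G` contains an induced copy of `H`. -/
def HasInduced {W V : Type*} (H : SimpleGraph W) (G : SimpleGraph V) : Prop :=
  Nonempty (H ↪g G)

/-- Add one isolated vertex to a graph. -/
def addIsolated {V : Type*} (G : SimpleGraph V) : SimpleGraph (Option V) :=
  SimpleGraph.fromRel (fun u v => ∃ a b, u = some a ∧ v = some b ∧ G.Adj a b)

/-- Add one universal vertex to a graph. -/
def addUniversal {V : Type*} (G : SimpleGraph V) : SimpleGraph (Option V) :=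
  SimpleGraph.fromRel (fun u v => (∃ a b, u = some a ∧ v = some b ∧ G.Adj a b) ∨ u = none)

/-- `C_k^*`: the chordless cycle `C_k` plus an isolated vertex. -/
def cycStar (k : ℕ) : SimpleGraph (Option (Fin k)) := addIsolated (cycG k)

/-- The `k`-wheel: the chordless cycle `C_k` plus a universal vertex. -/
def wheelG (k : ℕ) : SimpleGraph (Option (Fin k)) := addUniversal (cycG k)

/-- The bipartite claw: `K_{1,3}` with every edge subdivided once. -/
def bipartiteClaw : SimpleGraph (Fin 7) :=
  SimpleGraph.fromEdgeSet {s(0,1), s(0,2), s(0,3), s(1,4), s(2,5), s(3,6)}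

/-- The umbrella: a path `0-1-2-3-4`, a hub `5` adjacent to all path vertices,
and a vertex `6` adjacent only to the middle vertex `2` of the path. -/
def umbrella : SimpleGraph (Fin 7) :=
  SimpleGraph.fromEdgeSet
    {s(0,1), s(1,2), s(2,3), s(3,4), s(5,0), s(5,1), s(5,2), s(5,3), s(5,4), s(6,2)}

/-- The net (= 2-net): a triangle with one pendant vertex at each corner. -/
def netG : SimpleGraph (Fin 6) :=
  SimpleGraph.fromEdgeSet {s(0,1), s(1,2), s(2,0), s(3,0), s(4,1), s(5,2)}

/-- The tent (= 3-tent = 3-sun). -/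
def tentG : SimpleGraph (Fin 6) :=
  SimpleGraph.fromEdgeSet
    {s(0,1), s(1,2), s(2,0), s(3,0), s(3,1), s(4,1), s(4,2), s(5,2), s(5,0)}

/-- The `k`-net (for `k ≥ 2`), with `k + 4` vertices: a chordless path
`p_0, …, p_k` (indices `0, …, k`), a vertex `q = k+1` adjacent to `p_0, …, p_{k-1}`,
a pendant `r = k+2` on `q`, and a pendant `t = k+3` on `p_0`. -/
def kNet (k : ℕ) : SimpleGraph (Fin (k + 4)) :=
  SimpleGraph.fromRel (fun a b =>
    (a.val + 1 = b.val ∧ b.val ≤ k) ∨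
    (a.val = k + 1 ∧ b.val + 1 ≤ k) ∨
    (a.val = k + 1 ∧ b.val = k + 2) ∨
    (a.val = 0 ∧ b.val = k + 3))

/-- The `k`-tent (for `k ≥ 3`), with `k + 3` vertices: a chordless path
`p_0, …, p_{k-3}` (indices `0, …, k-3`), a vertex `a = k-2` adjacent to `p_0`,
a vertex `q = k-1` adjacent to `a` and to `p_0, …, p_{k-4}`, a pendant `r = k` on `q`,
a vertex `z = k+1` adjacent to `a` and `q`, and a hub `h = k+2` adjacent to every
vertex except `z`.  For `k = 3` this is the `3`-sun. -/
def kTent (k : ℕ) : SimpleGraph (Fin (k + 3)) :=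
  SimpleGraph.fromRel (fun x y =>
    (x.val + 1 = y.val ∧ y.val + 3 ≤ k) ∨
    (x.val + 2 = k ∧ y.val = 0) ∨
    (x.val + 2 = k ∧ y.val + 1 = k) ∨
    (x.val + 1 = k ∧ y.val + 4 ≤ k) ∨
    (x.val = k + 1 ∧ (y.val + 2 = k ∨ y.val + 1 = k)) ∨
    (x.val + 1 = k ∧ y.val = k) ∨
    (x.val = k + 2 ∧ y.val ≤ k))

/-- The Trotter–Moore graph `G_1` (as described in the source): vertices `x=0, y=1, z=2,
w₁=3, w₂=4` with edges `xy`, `yz`, and `w₁, w₂` each adjacent to `x`, `y`, `z`. -/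
def G1 : SimpleGraph (Fin 5) :=
  SimpleGraph.fromEdgeSet
    {s(0,1), s(1,2), s(3,0), s(3,1), s(3,2), s(4,0), s(4,1), s(4,2)}

/-- The Trotter–Moore graph `G_2`: a four-cycle `0-1-2-3`, a vertex `4` adjacent to `0`,
a vertex `5` adjacent to `2`, and the edge `4-5`. -/
def G2 : SimpleGraph (Fin 6) :=
  SimpleGraph.fromEdgeSet {s(0,1), s(1,2), s(2,3), s(3,0), s(4,0), s(5,2), s(4,5)}

/-- The Trotter–Moore graph `G_3`: a five-cycle `0-1-2-3-4` plus a vertex `5`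
adjacent to `0`, `2` and `3`. -/
def G3 : SimpleGraph (Fin 6) :=
  SimpleGraph.fromEdgeSet {s(0,1), s(1,2), s(2,3), s(3,4), s(4,0), s(5,0), s(5,2), s(5,3)}

/-- The Trotter–Moore graph `G_4`: a five-cycle `0-1-2-3-4`, a vertex `5` adjacent to `0`,
a vertex `6` adjacent to `2`, and the edge `5-6`. -/
def G4 : SimpleGraph (Fin 7) :=
  SimpleGraph.fromEdgeSet
    {s(0,1), s(1,2), s(2,3), s(3,4), s(4,0), s(5,0), s(6,2), s(5,6)}

/-- The domino: two four-cycles sharing an edge (`C_6` plus one long chord). -/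
def dominoG : SimpleGraph (Fin 6) :=
  SimpleGraph.fromEdgeSet {s(0,1), s(1,2), s(2,3), s(3,4), s(4,5), s(5,0), s(0,3)}

/-- The complement of the chordless six-cycle. -/
def C6bar : SimpleGraph (Fin 6) := (cycG 6)ᶜ

/-- Gimbel's graph `F_1`: a chordless path `0-1-2-3-4` together with a vertex `5`
whose only neighbor is the middle vertex `2` of the path. -/
def F1 : SimpleGraph (Fin 6) :=
  SimpleGraph.fromEdgeSet {s(0,1), s(1,2), s(2,3), s(3,4), s(5,2)}

/-- The set `A_i` with respect to a chordless cycle `c : Fin n → V`: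
vertices off the cycle adjacent to `v_{i-1}` and `v_i` having a neighbor `w`
adjacent to `v_i` but not to `v_{i-1}`. -/
def Aset {V : Type*} {n : ℕ} [NeZero n] (G : SimpleGraph V) (c : Fin n → V) (i : Fin n) : Set V :=
  {v | v ∉ Set.range c ∧ G.Adj v (c (i - 1)) ∧ G.Adj v (c i) ∧
    ∃ w, G.Adj v w ∧ G.Adj w (c i) ∧ ¬ G.Adj w (c (i - 1))}

/-- The set `B_i`: vertices off the cycle adjacent to `v_i` and `v_{i+1}` having a
neighbor `w` adjacent to `v_i` but not to `v_{i+1}`. -/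
def Bset {V : Type*} {n : ℕ} [NeZero n] (G : SimpleGraph V) (c : Fin n → V) (i : Fin n) : Set V :=
  {v | v ∉ Set.range c ∧ G.Adj v (c i) ∧ G.Adj v (c (i + 1)) ∧
    ∃ w, G.Adj v w ∧ G.Adj w (c i) ∧ ¬ G.Adj w (c (i + 1))}

/-- The set `O_i`: vertices off the cycle whose unique neighbor on the cycle is `v_i`. -/
def Oset {V : Type*} {n : ℕ} (G : SimpleGraph V) (c : Fin n → V) (i : Fin n) : Set V :=
  {v | v ∉ Set.range c ∧ ∀ j, G.Adj v (c j) ↔ j = i}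

/-- The set `T_i`: vertices off the cycle whose neighbors on the cycle are exactly
`v_i` and `v_{i+1}`, and which belong to neither `B_i` nor `A_{i+1}`. -/
def Tset {V : Type*} {n : ℕ} [NeZero n] (G : SimpleGraph V) (c : Fin n → V) (i : Fin n) : Set V :=
  {v | v ∉ Set.range c ∧ (∀ j, G.Adj v (c j) ↔ (j = i ∨ j = i + 1)) ∧
    v ∉ Bset G c i ∪ Aset G c (i + 1)}

/-!
The wheel has a circular-arc model: the hub gets the whole circle and the `k` rim vertices
the arcs `[i / k, (i + 1) / k]`.

Suppose the wheel had a model in which no three arcs cover the circle. The rim arcs cover the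
circle: otherwise cutting the circle at an uncovered point turns them into an interval model of
`C_k`, but the vertex whose interval ends first is simplicial in an interval model, and `C_k` has
no simplicial vertex for `k ≥ 4`. Every rim arc meets the hub arc `[a, b]`, so a rim arc
containing a point `t` of the gap `[b, a + 1]` contains `[b, t]` or `[t, a + 1]`. The rim arcs
reaching furthest into the gap from either side then cover it, and together with the hub arc
they are three arcs covering the circle.
-/

open Set

lemma coe_eq_coe_iff_exists_int {x y : ℝ} : (x : Circ) = y ↔ ∃ n : ℤ, x = y + n := by
  rw [QuotientAddGroup.eq, AddSubgroup.mem_zmultiples_iff]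
  constructor
  · rintro ⟨n, hn⟩
    exact ⟨-n, by simp only [zsmul_eq_mul, mul_one] at hn; push_cast; linarith⟩
  · rintro ⟨n, rfl⟩
    exact ⟨-n, by simp⟩

lemma arcIcc_add_int (p : ℝ × ℝ) (n : ℤ) : arcIcc (p.1 + n, p.2 + n) = arcIcc p := by
  rw [arcIcc, arcIcc, ← image_add_const_Icc, image_image]
  exact image_congr fun x _ => coe_eq_coe_iff_exists_int.mpr ⟨n, rfl⟩

lemma exists_int_mem_Icc_of_coe_mem_arcIcc {p : ℝ × ℝ} {t : ℝ} (ht : (t : Circ) ∈ arcIcc p) :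
    ∃ n : ℤ, t ∈ Icc (p.1 + n) (p.2 + n) := by
  obtain ⟨x, hx, hxt⟩ := ht
  obtain ⟨n, rfl⟩ := coe_eq_coe_iff_exists_int.mp hxt.symm
  exact ⟨n, by simpa using hx⟩

lemma arcIcc_zero_one : arcIcc (0, 1) = univ := by
  simpa [arcIcc] using AddCircle.coe_image_Icc_eq (1 : ℝ) 0

lemma exists_Icc_add_int_subset_Ico {p : ℝ × ℝ} {τ : ℝ} (hτ : (τ : Circ) ∉ arcIcc p) :
    ∃ n : ℤ, Icc (p.1 + n) (p.2 + n) ⊆ Ico τ (τ + 1) := by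
  refine ⟨⌈τ - p.1⌉, fun x hx => ⟨?_, ?_⟩⟩
  · linarith [Int.le_ceil (τ - p.1), hx.1]
  · by_contra hge
    apply hτ
    rw [← arcIcc_add_int p ⌈τ - p.1⌉, ← AddCircle.coe_add_period]
    exact mem_image_of_mem _ ⟨by linarith [Int.ceil_lt_add_one (τ - p.1)], by linarith [hx.2]⟩

lemma cycG_adj_iff {k : ℕ} {i j : Fin k} :
    (cycG k).Adj i j ↔ i ≠ j ∧ ((i + 1 : ℕ) % k = j ∨ (j + 1 : ℕ) % k = i) := by
  simp [cycG]

lemma cycG_adj_iff_add_one {k : ℕ} [NeZero k] {i j : Fin k} :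
    (cycG k).Adj i j ↔ i ≠ j ∧ (i + 1 = j ∨ j + 1 = i) := by
  simp [cycG, Fin.ext_iff, Fin.val_add]

open Fin.CommRing in
lemma not_isClique_cycG_neighborSet {k : ℕ} (hk : 4 ≤ k) (i : Fin k) :
    ¬ (cycG k).IsClique ((cycG k).neighborSet i) := by
  have : NeZero k := ⟨by omega⟩
  have hne : ∀ n : ℕ, 0 < n → n < k → (n : Fin k) ≠ 0 := fun n hn hnk => by
    rw [Ne, Fin.natCast_eq_zero]
    exact Nat.not_dvd_of_pos_of_lt hn hnk
  have h1 : (1 : Fin k) ≠ 0 := by exact_mod_cast hne 1 one_pos (by omega)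
  have h2 : (2 : Fin k) ≠ 0 := by exact_mod_cast hne 2 two_pos (by omega)
  have h3 : (3 : Fin k) ≠ 0 := by exact_mod_cast hne 3 three_pos (by omega)
  intro hclique
  have hnext : (cycG k).Adj i (i + 1) := cycG_adj_iff_add_one.mpr
    ⟨fun h => h1 (by linear_combination -h), Or.inl rfl⟩
  have hprev : (cycG k).Adj i (i - 1) := cycG_adj_iff_add_one.mpr
    ⟨fun h => h1 (by linear_combination h), Or.inr (sub_add_cancel i 1)⟩
  have := hclique hnext hprev (fun h => h2 (by linear_combination h))
  rcases cycG_adj_iff_add_one.mp this with ⟨-, h | h⟩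
  · exact h3 (by linear_combination h)
  · exact h1 (by linear_combination -h)

section IntervalModel
variable {V : Type*} {G : SimpleGraph V}

lemma isIntervalGraph_of_subsingleton [Finite V] [Subsingleton V] (G : SimpleGraph V) :
    IsIntervalGraph G :=
  ⟨fun _ => (0, 0), fun _ => le_rfl, fun u v huv => absurd (Subsingleton.elim u v) huv⟩

lemma IsIntervalModel.exists_isClique_neighborSet [Finite V] [Nonempty V] {M : V → ℝ × ℝ}
    (hM : IsIntervalModel G M) : ∃ v, G.IsClique (G.neighborSet v) := by
  obtain ⟨v, hv⟩ := Finite.exists_min fun v => (M v).2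
  have hend : ∀ u, G.Adj v u → (M v).2 ∈ Icc (M u).1 (M u).2 := fun u hu => by
    obtain ⟨z, hzv, hzu⟩ := (hM.2 v u hu.ne).mp hu
    exact ⟨hzu.1.trans hzv.2, hv u⟩
  exact ⟨v, fun u hu w hw huw => (hM.2 u w huw).mpr ⟨(M v).2, hend u hu, hend w hw⟩⟩

lemma not_isIntervalGraph_cycG {k : ℕ} (hk : 4 ≤ k) : ¬ IsIntervalGraph (cycG k) := by
  rintro ⟨M, hM⟩
  have : Nonempty (Fin k) := ⟨⟨0, by omega⟩⟩
  obtain ⟨i, hi⟩ := hM.exists_isClique_neighborSet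
  exact not_isClique_cycG_neighborSet hk i hi

lemma IsCAModel.exists_isIntervalModel {M : V → ℝ × ℝ} (hM : IsCAModel G M) {τ : ℝ}
    (hτ : ∀ v, (τ : Circ) ∉ arcIcc (M v)) : ∃ L, IsIntervalModel G L := by
  choose n hn using fun v => exists_Icc_add_int_subset_Ico (hτ v)
  have hinj : InjOn ((↑) : ℝ → Circ) (Ico τ (τ + 1)) := fun x hx y hy h =>
    (AddCircle.coe_eq_coe_iff_of_mem_Ico hx hy).mp h
  refine ⟨fun v => ((M v).1 + n v, (M v).2 + n v), fun v => by simpa using hM.1 v,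
    fun u v huv => ?_⟩
  rw [hM.2 u v huv, ← arcIcc_add_int (M u) (n u), ← arcIcc_add_int (M v) (n v), arcIcc, arcIcc,
    ← hinj.image_inter (hn u) (hn v), image_nonempty]

end IntervalModel

/-- The sets `{t | [b, t] ⊆ S i}` are lower sets, hence totally ordered by inclusion: take `i`
with the largest one and, dually, `j` with the largest `{t | [t, e] ⊆ S j}`. -/
lemma exists_Icc_subset_union_of_forall {α ι : Type*} [LinearOrder α] [Finite ι] [Nonempty ι]
    {S : ι → Set α} {b e : α} (h : ∀ t ∈ Icc b e, ∃ i, Icc b t ⊆ S i ∨ Icc t e ⊆ S i) :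
    ∃ i j, Icc b e ⊆ S i ∪ S j := by
  let D : ι → LowerSet α := fun i =>
    ⟨{t | Icc b t ⊆ S i}, fun _ _ hle ht => (Icc_subset_Icc_right hle).trans ht⟩
  let U : ι → UpperSet α := fun i =>
    ⟨{t | Icc t e ⊆ S i}, fun _ _ hle ht => (Icc_subset_Icc_left hle).trans ht⟩
  obtain ⟨i, hi⟩ := Finite.exists_max D
  obtain ⟨j, hj⟩ := Finite.exists_min U
  refine ⟨i, j, fun t ht => ?_⟩
  obtain ⟨l, hl | hl⟩ := h t ht
  · exact Or.inl (hi l hl ⟨ht.1, le_rfl⟩)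
  · exact Or.inr (hj l hl ⟨le_rfl, ht.2⟩)

lemma Icc_subset_preimage_arcIcc_or {p q : ℝ × ℝ} {t : ℝ}
    (hmeet : (arcIcc p ∩ arcIcc q).Nonempty) (ht : (t : Circ) ∈ arcIcc q) :
    Icc p.2 t ⊆ (↑) ⁻¹' arcIcc q ∨ Icc t (p.1 + 1) ⊆ (↑) ⁻¹' arcIcc q := by
  obtain ⟨n, htn⟩ := exists_int_mem_Icc_of_coe_mem_arcIcc ht
  rw [← arcIcc_add_int q n] at hmeet ⊢
  obtain ⟨-, ⟨x, hx, rfl⟩, ⟨s, hs, hsx⟩⟩ := hmeet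
  obtain ⟨m, rfl⟩ := coe_eq_coe_iff_exists_int.mp hsx
  rcases le_or_gt m 0 with hm | hm
  · have : (m : ℝ) ≤ 0 := by exact_mod_cast hm
    exact Or.inl fun u hu => mem_image_of_mem _
      ⟨by linarith [hs.1, hx.2, hu.1], hu.2.trans htn.2⟩
  · have : (1 : ℝ) ≤ m := by exact_mod_cast hm
    exact Or.inr fun u hu => mem_image_of_mem _
      ⟨htn.1.trans hu.1, by linarith [hs.2, hx.1, hu.2]⟩

lemma exists_arcIcc_union_eq_univ {ι : Type*} [Finite ι] {H : ℝ × ℝ} {A : ι → ℝ × ℝ}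
    (hmeet : ∀ i, (arcIcc H ∩ arcIcc (A i)).Nonempty)
    (hcover : ∀ z : Circ, ∃ i, z ∈ arcIcc (A i)) :
    ∃ i j, arcIcc H ∪ arcIcc (A i) ∪ arcIcc (A j) = univ := by
  have : Nonempty ι := ⟨(hcover 0).choose⟩
  obtain ⟨i, j, hij⟩ := exists_Icc_subset_union_of_forall (b := H.2) (e := H.1 + 1) fun t _ =>
    let ⟨i, hi⟩ := hcover t
    ⟨i, Icc_subset_preimage_arcIcc_or (hmeet i) hi⟩
  refine ⟨i, j, eq_univ_of_forall fun z => ?_⟩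
  obtain ⟨x, hx, rfl⟩ : z ∈ ((↑) : ℝ → Circ) '' Ico H.2 (H.2 + 1) := by
    rw [AddCircle.coe_image_Ico_eq]; trivial
  rcases le_or_gt x (H.1 + 1) with hxa | hxa
  · rcases hij ⟨hx.1, hxa⟩ with h | h
    · exact Or.inl (Or.inr h)
    · exact Or.inr h
  · refine Or.inl (Or.inl ⟨x - 1, ⟨by linarith, by linarith [hx.2]⟩, ?_⟩)
    exact coe_eq_coe_iff_exists_int.mpr ⟨-1, by push_cast; ring⟩

section Universal
variable {V : Type*} {G : SimpleGraph V}

lemma addUniversal_adj_some {a b : V} : (addUniversal G).Adj (some a) (some b) ↔ G.Adj a b := by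
  simpa [addUniversal, G.adj_comm b a] using fun h : G.Adj a b => h.ne

lemma addUniversal_adj_none (a : V) : (addUniversal G).Adj none (some a) := by
  simp [addUniversal]

lemma IsCAModel.comp_some {M : Option V → ℝ × ℝ} (hM : IsCAModel (addUniversal G) M) :
    IsCAModel G (M ∘ some) :=
  ⟨fun v => hM.1 (some v), fun u v huv =>
    addUniversal_adj_some.symm.trans (hM.2 (some u) (some v) (Option.some_injective _ |>.ne huv))⟩

lemma not_isNHCAGraph_addUniversal [Finite V] (hG : ¬ IsIntervalGraph G) :
    ¬ IsNHCAGraph (addUniversal G) := by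
  rintro ⟨M, hM, hNH⟩
  have hcover : ∀ z : Circ, ∃ v, z ∈ arcIcc (M (some v)) := by
    intro z
    by_contra! hz
    obtain ⟨τ, rfl⟩ := QuotientAddGroup.mk_surjective z
    exact hG (hM.comp_some.exists_isIntervalModel hz)
  have hmeet : ∀ v, (arcIcc (M none) ∩ arcIcc (M (some v))).Nonempty := fun v =>
    (hM.2 none (some v) (by simp)).mp (addUniversal_adj_none v)
  obtain ⟨u, v, huv⟩ := exists_arcIcc_union_eq_univ hmeet hcover
  have : Nontrivial V := by
    by_contra hV
    rw [not_nontrivial_iff_subsingleton] at hV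
    exact hG (isIntervalGraph_of_subsingleton G)
  obtain ⟨w, hwu, hw⟩ : ∃ w, w ≠ u ∧
      arcIcc (M none) ∪ arcIcc (M (some u)) ∪ arcIcc (M (some w)) = univ := by
    by_cases h : v = u
    · obtain ⟨w, hw⟩ := exists_ne u
      refine ⟨w, hw, eq_univ_of_univ_subset (huv ▸ ?_)⟩
      rw [h, union_assoc, union_self]
      exact subset_union_left
    · exact ⟨v, h, huv⟩
  exact hNH none (some u) (some w) (by simp) (by simp) (by simpa using hwu.symm) hw

lemma IsCAModel.addUniversal {M : V → ℝ × ℝ} (hM : IsCAModel G M) :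
    IsCAModel (addUniversal G) (fun v => v.elim (0, 1) M) := by
  have hhub : ∀ v, (arcIcc (0, 1) ∩ arcIcc (M v)).Nonempty := fun v => by
    rw [arcIcc_zero_one, univ_inter]
    exact ⟨_, mem_image_of_mem _ (left_mem_Icc.mpr (hM.1 v))⟩
  refine ⟨fun v => ?_, fun u v huv => ?_⟩
  · cases v with
    | none => exact zero_le_one
    | some v => exact hM.1 v
  · cases u with
    | none =>
      cases v with
      | none => exact absurd rfl huv
      | some v => exact iff_of_true (addUniversal_adj_none v) (hhub v)
    | some u =>
      cases v with
      | none => exact iff_of_true (addUniversal_adj_none u).symm (inter_comm _ _ ▸ hhub u)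
      | some v => exact addUniversal_adj_some.trans (hM.2 u v (by simpa using huv))

lemma IsCircularArcGraph.addUniversal [Finite V] (hG : IsCircularArcGraph G) :
    IsCircularArcGraph (addUniversal G) :=
  let ⟨_, hM⟩ := hG
  ⟨_, hM.addUniversal⟩

end Universal

lemma Nat.add_one_mod_eq_iff {i j k : ℕ} (hi : i < k) :
    (i + 1) % k = j ↔ (i + 1 < k ∧ j = i + 1) ∨ (i + 1 = k ∧ j = 0) := by
  rcases Nat.lt_or_ge (i + 1) k with h | h
  · rw [Nat.mod_eq_of_lt h]; omega
  · rw [show i + 1 = k by omega, Nat.mod_self]; omega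

lemma coe_natCast_div_eq_coe_mod_div (m k : ℕ) :
    (((m : ℝ) / k : ℝ) : Circ) = (((m % k : ℕ) : ℝ) / k : ℝ) := by
  rcases eq_or_ne k 0 with rfl | hk
  · simp
  refine coe_eq_coe_iff_exists_int.mpr ⟨(m / k : ℕ), ?_⟩
  have hk' : (k : ℝ) ≠ 0 := by exact_mod_cast hk
  have hm : (m : ℝ) = (m % k : ℕ) + k * (m / k : ℕ) := by
    exact_mod_cast (Nat.mod_add_div m k).symm
  rw [hm, Int.cast_natCast]
  field_simp

noncomputable def cycleArcs (k : ℕ) (i : Fin k) : ℝ × ℝ := (i / k, (i + 1) / k)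

lemma cycG_adj_of_arcIcc_inter_nonempty {k : ℕ} {i j : Fin k} (hij : i ≠ j)
    (h : (arcIcc (cycleArcs k i) ∩ arcIcc (cycleArcs k j)).Nonempty) : (cycG k).Adj i j := by
  obtain ⟨-, ⟨x, hx, rfl⟩, ⟨y, hy, hxy⟩⟩ := h
  obtain ⟨n, rfl⟩ := coe_eq_coe_iff_exists_int.mp hxy
  have hk : (0 : ℝ) < k := by exact_mod_cast i.pos
  simp only [cycleArcs, mem_Icc, div_le_iff₀ hk, le_div_iff₀ hk] at hx hy
  rw [add_mul] at hy
  have hlow : (j : ℤ) - i - 1 ≤ n * k := by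
    have : (j : ℝ) - i - 1 ≤ n * k := by linarith
    exact_mod_cast this
  have hhigh : n * k ≤ (j : ℤ) - i + 1 := by
    have : (n * k : ℝ) ≤ j - i + 1 := by linarith
    exact_mod_cast this
  have hi := i.isLt
  have hj := j.isLt
  have hij' : (i : ℕ) ≠ j := Fin.val_ne_of_ne hij
  rw [cycG_adj_iff, Nat.add_one_mod_eq_iff hi, Nat.add_one_mod_eq_iff hj]
  refine ⟨hij, ?_⟩
  rcases lt_trichotomy n 0 with hn | rfl | hn
  · have : n * k ≤ -k := by nlinarith
    omega
  · omega
  · have : (k : ℤ) ≤ n * k := by nlinarith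
    omega

lemma arcIcc_cycleArcs_inter_nonempty {k : ℕ} {i j : Fin k} (h : ((i : ℕ) + 1) % k = j) :
    (arcIcc (cycleArcs k i) ∩ arcIcc (cycleArcs k j)).Nonempty := by
  have hle : ∀ l : Fin k, (l / k : ℝ) ≤ (l + 1) / k := fun l =>
    div_le_div_of_nonneg_right (by linarith) k.cast_nonneg
  have hcoe := coe_natCast_div_eq_coe_mod_div ((i : ℕ) + 1) k
  rw [h, Nat.cast_succ] at hcoe
  exact ⟨_, mem_image_of_mem _ (right_mem_Icc.mpr (hle i)),
    hcoe ▸ mem_image_of_mem _ (left_mem_Icc.mpr (hle j))⟩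

lemma isCAModel_cycleArcs (k : ℕ) : IsCAModel (cycG k) (cycleArcs k) := by
  refine ⟨fun i => div_le_div_of_nonneg_right (by linarith) k.cast_nonneg,
    fun i j hij => ⟨fun h => ?_, cycG_adj_of_arcIcc_inter_nonempty hij⟩⟩
  rcases (cycG_adj_iff.mp h).2 with h | h
  · exact arcIcc_cycleArcs_inter_nonempty h
  · exact inter_comm _ _ ▸ arcIcc_cycleArcs_inter_nonempty h

/-- For every `k ≥ 4`, the `k`-wheel is a circular-arc graph but
not a normal Helly circular-arc graph. -/
theorem stmt2 (k : ℕ) (hk : 4 ≤ k) :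
    IsCircularArcGraph (wheelG k) ∧ ¬ IsNHCAGraph (wheelG k) :=
  ⟨IsCircularArcGraph.addUniversal ⟨_, isCAModel_cycleArcs k⟩,
    not_isNHCAGraph_addUniversal (not_isIntervalGraph_cycG hk)⟩
end

section
/- Let G be an interval graph with an interval model in which the interval of vertex v has the leftmost left endpoint (no other endpoint lies strictly to its left) among all intervals. Then G contains no induced P_5 with v as its middle vertex, no induced copy of the graph F_1 (a P_5 together with an extra vertex whose only neighbor is the middle vertex of the P_5) with v as the extra vertex, and no induced copy of F_s for s ≥ 2 with v in the designated position. -/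
open SimpleGraph

/-! If `v`'s interval has the leftmost left endpoint, every non-neighbour of `v` starts right of
`v`'s right endpoint. In a `P_5` with middle vertex `v` the two ends of the path are such
non-neighbours, so the two neighbours of `v` on the path, each meeting `v` and an end, both contain
`v`'s right endpoint and are adjacent. In an `F_1` with pendant `v` the ends are non-neighbours of
`v`, hence start right of the interval of the middle vertex `m`, and now the neighbours of `m` on
the path share `m`'s right endpoint. -/

namespace IsIntervalModel

variable {V : Type*} {G : SimpleGraph V} {M : V → ℝ × ℝ} {u v w x y : V}

theorem adj_iff (hM : IsIntervalModel G M) (h : u ≠ w) :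
    G.Adj u w ↔ (M u).1 ≤ (M w).2 ∧ (M w).1 ≤ (M u).2 := by
  rw [hM.2 u w h, Set.Icc_inter_Icc, Set.nonempty_Icc, max_le_iff, le_min_iff, le_min_iff]
  exact ⟨fun h => ⟨h.1.2, h.2.1⟩, fun h => ⟨⟨hM.1 u, h.1⟩, h.2, hM.1 w⟩⟩

theorem right_lt_left_of_not_adj (hM : IsIntervalModel G M) (h : u ≠ w) (hn : ¬ G.Adj u w)
    (hle : (M u).1 ≤ (M w).2) : (M u).2 < (M w).1 := by
  by_contra! hlt
  exact hn ((hM.adj_iff h).2 ⟨hle, hlt⟩)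

theorem adj_of_left_le_of_adj_of_lt_left (hM : IsIntervalModel G M) {p : ℝ} (hxy : x ≠ y)
    (hx : (M x).1 ≤ p) (hy : (M y).1 ≤ p) (hxu : G.Adj x u) (hyw : G.Adj y w)
    (hu : p < (M u).1) (hw : p < (M w).1) : G.Adj x y := by
  have hxu' := (hM.adj_iff hxu.ne).1 hxu
  have hyw' := (hM.adj_iff hyw.ne).1 hyw
  exact (hM.adj_iff hxy).2 ⟨by linarith, by linarith⟩


theorem not_exists_pathG_embedding_middle (hM : IsIntervalModel G M)
    (hleft : ∀ u, (M v).1 ≤ (M u).2) : ¬ ∃ f : pathG 5 ↪g G, f 2 = v := by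
  rintro ⟨f, rfl⟩
  have adj {i j : Fin 5} (h : (pathG 5).Adj i j) : G.Adj (f i) (f j) := f.map_adj_iff.2 h
  have reach (i : Fin 5) (h : (pathG 5).Adj i 2) : (M (f i)).1 ≤ (M (f 2)).2 :=
    ((hM.adj_iff (adj h).ne).1 (adj h)).1
  have far (i : Fin 5) (hi : 2 ≠ i) (hn : ¬ (pathG 5).Adj 2 i) : (M (f 2)).2 < (M (f i)).1 :=
    hM.right_lt_left_of_not_adj (f.injective.ne hi) (f.map_adj_iff.not.2 hn) (hleft _)
  have h13 := hM.adj_of_left_le_of_adj_of_lt_left (f.injective.ne (by decide))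
    (reach 1 (by simp [pathG])) (reach 3 (by simp [pathG])) (adj (j := 0) (by simp [pathG]))
    (adj (j := 4) (by simp [pathG])) (far 0 (by decide) (by simp [pathG]))
    (far 4 (by decide) (by simp [pathG]))
  exact (by simp [pathG] : ¬ (pathG 5).Adj 1 3) (f.map_adj_iff.1 h13)

theorem not_exists_F1_embedding_pendant (hM : IsIntervalModel G M)
    (hleft : ∀ u, (M v).1 ≤ (M u).2) : ¬ ∃ f : F1 ↪g G, f 5 = v := by
  rintro ⟨f, rfl⟩
  have adj {i j : Fin 6} (h : F1.Adj i j) : G.Adj (f i) (f j) := f.map_adj_iff.2 h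
  have reach (i : Fin 6) (h : F1.Adj i 2) : (M (f i)).1 ≤ (M (f 2)).2 :=
    ((hM.adj_iff (adj h).ne).1 (adj h)).1
  have far (i : Fin 6) (h5 : 5 ≠ i) (hn5 : ¬ F1.Adj 5 i) (h2 : 2 ≠ i) (hn2 : ¬ F1.Adj 2 i) :
      (M (f 2)).2 < (M (f i)).1 := by
    have hv := hM.right_lt_left_of_not_adj (f.injective.ne h5) (f.map_adj_iff.not.2 hn5) (hleft _)
    have hm : (M (f 2)).1 ≤ (M (f 5)).2 :=
      ((hM.adj_iff (adj (i := 5) (j := 2) (by simp [F1])).ne).1 (adj (by simp [F1]))).2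
    refine hM.right_lt_left_of_not_adj (f.injective.ne h2) (f.map_adj_iff.not.2 hn2) ?_
    linarith [hM.1 (f i)]
  have h13 := hM.adj_of_left_le_of_adj_of_lt_left (f.injective.ne (by decide))
    (reach 1 (by simp [F1])) (reach 3 (by simp [F1])) (adj (j := 0) (by simp [F1]))
    (adj (j := 4) (by simp [F1])) (far 0 (by decide) (by simp [F1]) (by decide) (by simp [F1]))
    (far 4 (by decide) (by simp [F1]) (by decide) (by simp [F1]))
  exact (by simp [F1] : ¬ F1.Adj 1 3) (f.map_adj_iff.1 h13)

end IsIntervalModel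

theorem stmt7_general {V : Type*} (G : SimpleGraph V) (M : V → ℝ × ℝ)
    (hM : IsIntervalModel G M) (v : V)
    (hleft : ∀ u, (M v).1 ≤ (M u).1 ∧ (M v).1 ≤ (M u).2) :
    (¬ ∃ f : pathG 5 ↪g G, f 2 = v) ∧ (¬ ∃ f : F1 ↪g G, f 5 = v) :=
  ⟨hM.not_exists_pathG_embedding_middle fun u => (hleft u).2,
    hM.not_exists_F1_embedding_pendant fun u => (hleft u).2⟩

/-- necessity in Gimbel's end-vertex characterization, cases `s = 0, 1`:
if `G` has an interval model in which the interval of `v` has the leftmost left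
endpoint (no other endpoint lies further left), then `G` contains no induced `P_5`
with `v` as middle vertex and no induced `F_1` with `v` as the extra vertex. -/
theorem stmt7 {V : Type*} [Finite V] (G : SimpleGraph V) (M : V → ℝ × ℝ)
    (hM : IsIntervalModel G M) (v : V)
    (hleft : ∀ u, (M v).1 ≤ (M u).1 ∧ (M v).1 ≤ (M u).2) :
    (¬ ∃ f : pathG 5 ↪g G, f 2 = v) ∧ (¬ ∃ f : F1 ↪g G, f 5 = v) :=
  stmt7_general G M hM v hleft
end

section
/- Let G be a graph, C = v_1...v_n v_1 (n ≥ 4) a chordless cycle of G, and suppose G contains no induced C_k* for any k ≥ 4 and the neighbors on C of every vertex outside C induce a chordless path (nonempty). Define, for each i (mod n): O_i = vertices v off C with N(v) ∩ V(C) = {v_i}; A_i = vertices off C adjacent to v_{i-1} and v_i having a neighbor w adjacent to v_i but not v_{i-1}; B_i = vertices off C adjacent to v_i and v_{i+1} having a neighbor w adjacent to v_i but not v_{i+1}; T_i = vertices v off C with N(v) ∩ V(C) = {v_i, v_{i+1}} and v ∉ B_i ∪ A_{i+1}. Then V(G) \ V(C) is the union over i of A_i ∪ B_i ∪ O_i ∪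 T_i. -/
/-!
The neighbours of `v` on `C` form a chordless path `P` on `m ≥ 1` vertices. If `m = 1`,
then `v ∈ O_i`. If `m = 2`, `P` is an edge `v_i v_{i+1}` of `C`, and `v` lies in `B_i`, in
`A_{i+1}` or, failing both, in `T_i`. If `m ≥ 3`, the first three vertices of `P` are
`v_{i-1}, v_i, v_{i+1}` in some order, and `v ∈ A_i` with witness `w = v_{i+1}`, which is
adjacent to `v_i` but, `P` being chordless, not to `v_{i-1}`.
-/

open SimpleGraph

theorem eq_add_one_or_of_cycG_adj {n : ℕ} [NeZero n] {a b : Fin n} (h : (cycG n).Adj a b) :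
    b = a + 1 ∨ a = b + 1 := by
  have hsucc : ∀ x : Fin n, (x + 1).val = (x.val + 1) % n := fun x => by
    rw [Fin.val_add, Fin.val_one', Nat.add_mod_mod]
  simp only [cycG, fromRel_adj, Fin.ext_iff, hsucc] at h ⊢
  omega

theorem cycG_adj_adj_of_ne {n : ℕ} [NeZero n] {a b d : Fin n} (hab : (cycG n).Adj a b)
    (hbd : (cycG n).Adj b d) (had : a ≠ d) :
    (a = b - 1 ∧ d = b + 1) ∨ (a = b + 1 ∧ d = b - 1) := by
  rcases eq_add_one_or_of_cycG_adj hab with rfl | rfl <;>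
    rcases eq_add_one_or_of_cycG_adj hbd with rfl | hb
  · exact Or.inl ⟨(add_sub_cancel_right a 1).symm, rfl⟩
  · exact absurd (add_right_cancel hb) had
  · exact absurd rfl had
  · subst hb
    exact Or.inr ⟨rfl, (add_sub_cancel_right d 1).symm⟩

theorem pathG_adj {m : ℕ} {a b : Fin m} :
    (pathG m).Adj a b ↔ a.val + 1 = b.val ∨ b.val + 1 = a.val := by
  simp only [pathG, fromRel_adj, ne_eq, Fin.ext_iff]
  omega

theorem exists_lift_of_range_eq {V ι κ : Type*} {G : SimpleGraph V} {c : ι → V}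
    (hc : Function.Injective c) {v : V} {p : κ → V}
    (hp : Set.range p = {x | x ∈ Set.range c ∧ G.Adj v x}) :
    ∃ f : κ → ι, (∀ k, c (f k) = p k) ∧ ∀ j, G.Adj v (c j) ↔ j ∈ Set.range f := by
  choose f hf using fun k => (hp.subset (Set.mem_range_self k)).1
  refine ⟨f, hf, fun j => ?_⟩
  have hj : G.Adj v (c j) ↔ c j ∈ Set.range p := by simp [hp]
  simp only [hj, Set.mem_range, ← hf, hc.eq_iff]

section CycleNeighbourhood

variable {V : Type*} {G : SimpleGraph V} {n : ℕ} {c : Fin n → V} {v : V}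

theorem mem_Oset_of_adj_iff_mem_range (hv : v ∉ Set.range c) {f : Fin 1 → Fin n}
    (h : ∀ j, G.Adj v (c j) ↔ j ∈ Set.range f) : v ∈ Oset G c (f 0) :=
  ⟨hv, fun j => by rw [h, Set.range_unique]; rfl⟩

variable [NeZero n]

theorem exists_adj_iff_eq_or_eq_add_one {f : Fin 2 → Fin n} (hf : (cycG n).Adj (f 0) (f 1))
    (h : ∀ j, G.Adj v (c j) ↔ j ∈ Set.range f) :
    ∃ i, ∀ j, G.Adj v (c j) ↔ j = i ∨ j = i + 1 := by
  simp only [h, Set.mem_range, Fin.exists_fin_two]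
  rcases eq_add_one_or_of_cycG_adj hf with h1 | h0
  · exact ⟨f 0, fun j => by rw [h1, eq_comm, @eq_comm _ _ j]⟩
  · exact ⟨f 1, fun j => by rw [h0, or_comm, eq_comm, @eq_comm _ _ j]⟩

theorem mem_Bset_or_mem_Aset_or_mem_Tset (hv : v ∉ Set.range c) {i : Fin n}
    (h : ∀ j, G.Adj v (c j) ↔ j = i ∨ j = i + 1) :
    v ∈ Bset G c i ∨ v ∈ Aset G c (i + 1) ∨ v ∈ Tset G c i := by
  rw [or_iff_not_imp_left, or_iff_not_imp_left]
  exact fun hB hA => ⟨hv, h, fun hBA => hBA.elim hB hA⟩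

theorem mem_Aset_of_adj (hv : v ∉ Set.range c) {i : Fin n} (hprev : G.Adj v (c (i - 1)))
    (hcur : G.Adj v (c i)) (hnext : G.Adj v (c (i + 1))) (hedge : G.Adj (c (i + 1)) (c i))
    (hchord : ¬ G.Adj (c (i + 1)) (c (i - 1))) : v ∈ Aset G c i :=
  ⟨hv, hprev, hcur, c (i + 1), hnext, hedge, hchord⟩

end CycleNeighbourhood

theorem exists_mem_Aset_of_pathG {V : Type*} {G : SimpleGraph V} {n : ℕ} [NeZero n]
    (c : cycG n ↪g G) {v : V} (hv : v ∉ Set.range c) {m : ℕ} (hm : 3 ≤ m) (p : pathG m ↪g G)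
    {f : Fin m → Fin n} (hf : ∀ k, c (f k) = p k) (hadj : ∀ k, G.Adj v (c (f k))) :
    ∃ i, v ∈ Aset G c i := by
  have hG : ∀ k l, G.Adj (c (f k)) (c (f l)) ↔ (pathG m).Adj k l := fun k l => by
    rw [hf, hf, p.map_adj_iff]
  have hcyc : ∀ k l, (cycG n).Adj (f k) (f l) ↔ (pathG m).Adj k l := fun k l => by
    rw [← c.map_adj_iff, hG]
  let k₀ : Fin m := ⟨0, by omega⟩
  let k₁ : Fin m := ⟨1, by omega⟩
  let k₂ : Fin m := ⟨2, by omega⟩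
  have e₀₁ : (pathG m).Adj k₀ k₁ := pathG_adj.2 (Or.inl rfl)
  have e₁₂ : (pathG m).Adj k₁ k₂ := pathG_adj.2 (Or.inl rfl)
  have hchord : ¬ G.Adj (c (f k₂)) (c (f k₀)) := by simp [hG, pathG_adj, k₀, k₂]
  have hne : f k₀ ≠ f k₂ := fun h => by
    simpa [k₀, k₂, Fin.ext_iff] using p.injective (by rw [← hf, h, hf] : p k₀ = p k₂)
  rcases cycG_adj_adj_of_ne ((hcyc _ _).2 e₀₁) ((hcyc _ _).2 e₁₂) hne with ⟨h₀, h₂⟩ | ⟨h₀, h₂⟩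
  · refine ⟨f k₁, mem_Aset_of_adj hv ?_ (hadj k₁) ?_ ?_ ?_⟩ <;> simp only [← h₀, ← h₂]
    exacts [hadj k₀, hadj k₂, (hG _ _).2 e₁₂.symm, hchord]
  · refine ⟨f k₁, mem_Aset_of_adj hv ?_ (hadj k₁) ?_ ?_ ?_⟩ <;> simp only [← h₀, ← h₂]
    exacts [hadj k₂, hadj k₀, (hG _ _).2 e₀₁, fun h => hchord h.symm]

theorem stmt14_general {V : Type*} (G : SimpleGraph V)
    {n : ℕ} [NeZero n] (c : cycG n ↪g G)
    (hpath : ∀ u ∉ Set.range ⇑c, ∃ m, 1 ≤ m ∧ ∃ p : pathG m ↪g G,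
      Set.range ⇑p = {x | x ∈ Set.range ⇑c ∧ G.Adj u x}) :
    ∀ v ∉ Set.range ⇑c, ∃ i : Fin n,
      v ∈ Aset G ⇑c i ∪ Bset G ⇑c i ∪ Oset G ⇑c i ∪ Tset G ⇑c i := by
  intro v hv
  obtain ⟨m, hm, p, hp⟩ := hpath v hv
  obtain ⟨f, hf, hadj⟩ := exists_lift_of_range_eq c.injective hp
  rcases (by omega : m = 1 ∨ m = 2 ∨ 3 ≤ m) with rfl | rfl | hm
  · exact ⟨f 0, Or.inl (Or.inr (mem_Oset_of_adj_iff_mem_range hv hadj))⟩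
  · have hedge : (cycG n).Adj (f 0) (f 1) := by
      rw [← c.map_adj_iff, hf, hf, p.map_adj_iff, pathG_adj]
      exact Or.inl rfl
    obtain ⟨i, hi⟩ := exists_adj_iff_eq_or_eq_add_one hedge hadj
    rcases mem_Bset_or_mem_Aset_or_mem_Tset hv hi with hB | hA | hT
    exacts [⟨i, Or.inl (Or.inl (Or.inr hB))⟩, ⟨i + 1, Or.inl (Or.inl (Or.inl hA))⟩,
      ⟨i, Or.inr hT⟩]
  · obtain ⟨i, hA⟩ := exists_mem_Aset_of_pathG c hv hm p hf fun k => (hadj _).2 ⟨k, rfl⟩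
    exact ⟨i, Or.inl (Or.inl (Or.inl hA))⟩

/-- Claim 1 of the paper: with no induced `C_k^*` (`k ≥ 4`) and
neighbors on `C` of every vertex off `C` inducing a nonempty chordless path, every
vertex off `C` lies in some `A_i ∪ B_i ∪ O_i ∪ T_i`. -/
theorem stmt14 {V : Type*} [Finite V] (G : SimpleGraph V)
    (hstar : ∀ k, 4 ≤ k → ¬ HasInduced (cycStar k) G)
    {n : ℕ} [NeZero n] (hn : 4 ≤ n) (c : cycG n ↪g G)
    (hpath : ∀ u ∉ Set.range ⇑c, ∃ m, 1 ≤ m ∧ ∃ p : pathG m ↪g G,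
      Set.range ⇑p = {x | x ∈ Set.range ⇑c ∧ G.Adj u x}) :
    ∀ v ∉ Set.range ⇑c, ∃ i : Fin n,
      v ∈ Aset G ⇑c i ∪ Bset G ⇑c i ∪ Oset G ⇑c i ∪ Tset G ⇑c i :=
  stmt14_general G c hpath
end
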